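/- Let n ≥ 3 and let λ, μ, ν be integers with 0 < λ ≤ μ ≤ ν ≤ λ + μ and ν ≥ 3, and set P = P_n(λ,μ,ν). Over an algebraically closed field 𝕜 of characteristic 2, let X ⊂ P be the hypersurface defined by a x² + b y² + c z² + f x y = 0 with a, b, c, f ∈ 𝕜[u_0,…,u_{n−1}] general homogeneous of degrees −λ+μ+ν, λ−μ+ν, λ+μ−ν, ν respectively, and set X° = X ∖ (x = y = 0). Then X is smooth along X ∖ X°, i.e. smooth at every point of X with x = y = 0. -/

import Mathlib

/-!
Formalization framework for "Stable rationality of higher dimensional conic bundles"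
(Ahmadinezhad–Okada).

We model a weighted-projective-space bundle `P` over `ℙ^{n-1}` (in particular the
`ℙ²`-bundle `P_n(k,l,m) = ℙ(𝒪(-k) ⊕ 𝒪(-l) ⊕ 𝒪(-m))`, and the `ℙ(1,1,2)`-bundle `R`)
through its Cox ring `K[u_0,…,u_{n-1}, x_0,…,x_{m-1}]`, bigraded by
`deg u_i = (1,0)`, `deg x_j = (w j, a j)`, together with the action of the
two-dimensional torus on the affine cone.  A member `X` of the complete linear
system `|𝒪_P(α,β)| = |α F + β D|` (`F` the pullback of the hyperplane class of
`ℙ^{n-1}`, `D` the tautological class) is recorded by a bihomogeneous polynomial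
`g` of bidegree `(α,β)`, and the projection `π : X → ℙ^{n-1}` is induced by the
coordinates `u_0,…,u_{n-1}`.

Geometric notions are rendered as follows (all are genuine definitions):

* a *general* (resp. *very general*) member of a linear system: the property holds
  on a nonempty principal Zariski-open subset of the parameter space (resp. away
  from countably many proper closed subsets);
* smoothness of `X`: the Jacobian criterion on the punctured affine cone (where the
  torus acts freely the quotient map is a torsor, so this is smoothness of `X`);
* the function field `K(X)`: the degree-`(0,0)` part of the fraction field of the
  homogeneous coordinate ring `Cox/(g)`, i.e. the subalgebra generated by ratios of
  bihomogeneous elements of equal bidegree;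
* rationality: `K(X)` is `K`-isomorphic to a purely transcendental extension of
  `K` (i.e. `X` is birational to a projective space);
* stable rationality: `K(X)(x_1,…,x_r) ≅_K K(y_1,…,y_s)` for some `r,s`
  (i.e. `X × ℙ^r` is birational to a projective space);
* normality: the local rings of the relevant locus of the affine cone are
  integrally closed (the punctured cone is a smooth torsor over `X`);
* terminal singularities: rendered as `X` normal with singular locus of
  codimension at least 3, which is the form terminality takes for the general
  members appearing in the paper;
* ℚ-factoriality together with `ρ(X) = 2` (i.e. the divisor class group of `X` is
  spanned up to torsion by the fibre class `F` and the tautological class `D`):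
  rendered by requiring every relevant bihomogeneous height-one prime `P` of the
  coordinate ring of `X` to contain a bihomogeneous element lying in no other such
  prime (so that `div(f) = k·P` and `[P] ∈ ℚ⟨F, D⟩`);
* ampleness of `𝒪_X(α,β)`: some multiple is very ample, rendered by requiring the
  bihomogeneous sections of that multiple to be base point free, to separate
  points, and to separate tangent vectors (modulo the torus directions) on the
  cone over `X`;
* `π`-ampleness of `-K_X`: by adjunction `-K_X = 𝒪_X(e,1)` with
  `e = n + Σ w - deg g`, and relative ampleness over the projective base means
  some twist `𝒪_X(e+N,1)` by pullback classes from `ℙ^{n-1}` is ample;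
* connectedness of the fibres of `π : X → ℙ^{n-1}`: no fibre admits a disjoint
  covering by two zero sets of families of weighted-homogeneous polynomials, each
  meeting the fibre (i.e. Zariski-connectedness of the fibres), and all fibres are
  nonempty;
* a conic bundle (Mori fibre space of relative dimension one, Definition 2.5 of
  the paper): `X` is irreducible (the ideal of `g` is prime), normal, has only
  terminal singularities, `π` has connected fibres, `-K_X` is `π`-ample, and
  `ρ(X) = 2`; all in the above renderings.
-/

open MvPolynomial

set_option maxHeartbeats 1600000
set_option synthInstance.maxHeartbeats 400000

namespace ConicBundleFormalization

noncomputable section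

variable (K : Type) [Field K]

/-! ### The Cox ring and bihomogeneity -/

/-- The Cox ring of an `(m-1)`-dimensional weighted-projective-space bundle over
`ℙ^{n-1}`: variables `u_i` (`i : Fin n`) of bidegree `(1,0)` and fibre variables
`x_j` (`j : Fin m`) of bidegree `(w j, a j)`. -/
abbrev Cox (n m : ℕ) : Type := MvPolynomial (Fin n ⊕ Fin m) K

/-- `p` is bihomogeneous of bidegree `(α, β)` for the grading `deg u_i = (1,0)`,
`deg x_j = (w j, a j)`. -/
def IsBihom (n m : ℕ) (w : Fin m → ℤ) (a : Fin m → ℕ) (α : ℤ) (β : ℕ)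
    (p : Cox K n m) : Prop :=
  ∀ e ∈ p.support,
    ((∑ i : Fin n, (e (Sum.inl i) : ℤ)) + ∑ j : Fin m, (e (Sum.inr j) : ℤ) * w j = α) ∧
    ((∑ j : Fin m, e (Sum.inr j) * a j) = β)

/-- A polynomial in `u_0, …, u_{n-1}` is homogeneous of degree `d ∈ ℤ`
(for `d < 0` this forces `p = 0`). -/
def IsHomogZ (n : ℕ) (d : ℤ) (p : MvPolynomial (Fin n) K) : Prop :=
  ∀ e ∈ p.support, (∑ i : Fin n, (e i : ℤ)) = d

/-- A polynomial in the fibre variables is weighted-homogeneous of degree `e` for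
the weights `a`. -/
def IsWHom (m : ℕ) (a : Fin m → ℕ) (e : ℕ) (q : MvPolynomial (Fin m) K) : Prop :=
  ∀ ex ∈ q.support, (∑ j : Fin m, ex j * a j) = e

/-! ### Genericity: general and very general members of a linear system -/

/-- Evaluation of a polynomial `D` in the coefficients of `p`; such `D` are the
polynomial functions on the parameter space of the linear system. -/
def evalCoeff {n m : ℕ} (p : Cox K n m)
    (D : MvPolynomial ((Fin n ⊕ Fin m) →₀ ℕ) K) : K :=
  MvPolynomial.eval (fun e => p.coeff e) D

/-- `Pred` holds for a *general* member of the complete linear system of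
bihomogeneous polynomials of bidegree `(α,β)`: it holds on a nonempty principal
Zariski-open subset of the parameter space. -/
def GenerallyHolds (n m : ℕ) (w : Fin m → ℤ) (a : Fin m → ℕ) (α : ℤ) (β : ℕ)
    (Pred : Cox K n m → Prop) : Prop :=
  ∃ D : MvPolynomial ((Fin n ⊕ Fin m) →₀ ℕ) K,
    (∃ p₀, IsBihom K n m w a α β p₀ ∧ evalCoeff K p₀ D ≠ 0) ∧
    ∀ p, IsBihom K n m w a α β p → evalCoeff K p D ≠ 0 → Pred p

/-- `Pred` holds for a *very general* member of the complete linear system of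
bihomogeneous polynomials of bidegree `(α,β)`: it holds away from countably many
proper Zariski-closed subsets of the parameter space. -/
def VeryGenerallyHolds (n m : ℕ) (w : Fin m → ℤ) (a : Fin m → ℕ) (α : ℤ) (β : ℕ)
    (Pred : Cox K n m → Prop) : Prop :=
  ∃ D : ℕ → MvPolynomial ((Fin n ⊕ Fin m) →₀ ℕ) K,
    (∀ i, ∃ p₀, IsBihom K n m w a α β p₀ ∧ evalCoeff K p₀ (D i) ≠ 0) ∧
    ∀ p, IsBihom K n m w a α β p → (∀ i, evalCoeff K p (D i) ≠ 0) → Pred p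

/-- Evaluation of a polynomial `D` in the coefficients of a quadruple
`(a,b,c,f)` of polynomials in `u_0,…,u_{n-1}`. -/
def evalCoeff4 {n : ℕ} (abcf : Fin 4 → MvPolynomial (Fin n) K)
    (D : MvPolynomial (Fin 4 × (Fin n →₀ ℕ)) K) : K :=
  MvPolynomial.eval (fun q => (abcf q.1).coeff q.2) D

/-- `Pred` holds for a *general* quadruple `(a,b,c,f)` of homogeneous polynomials
in `u_0,…,u_{n-1}` of respective degrees `degs 0, …, degs 3`. -/
def GenerallyHolds4 (n : ℕ) (degs : Fin 4 → ℤ)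
    (Pred : (Fin 4 → MvPolynomial (Fin n) K) → Prop) : Prop :=
  ∃ D : MvPolynomial (Fin 4 × (Fin n →₀ ℕ)) K,
    (∃ abcf : Fin 4 → MvPolynomial (Fin n) K,
      (∀ i, IsHomogZ K n (degs i) (abcf i)) ∧ evalCoeff4 K abcf D ≠ 0) ∧
    ∀ abcf : Fin 4 → MvPolynomial (Fin n) K,
      (∀ i, IsHomogZ K n (degs i) (abcf i)) → evalCoeff4 K abcf D ≠ 0 → Pred abcf

/-! ### Points of the bundle: the punctured affine cone and the torus action -/

/-- A point of the affine cone `𝔸^n × 𝔸^m` over the bundle. -/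
abbrev Pt (n m : ℕ) : Type := (Fin n → K) × (Fin m → K)

/-- Evaluation of a Cox ring element at a point of the affine cone. -/
def evalPt {n m : ℕ} (p : Pt K n m) (f : Cox K n m) : K :=
  MvPolynomial.eval (Sum.elim p.1 p.2) f

/-- Membership in the complement of the irrelevant locus
`V(u_0,…,u_{n-1}) ∪ V(x_0,…,x_{m-1})`. -/
def InCone {n m : ℕ} (p : Pt K n m) : Prop := p.1 ≠ 0 ∧ p.2 ≠ 0

/-- Equivalence of two cone points under the action of the torus `𝔾_m²`:
`(s,t)·(u,x) = (s·u_i, s^{w j} t^{a j}·x_j)`.  The points of the bundle are the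
equivalence classes of points of the punctured cone. -/
def ToricEq {n m : ℕ} (w : Fin m → ℤ) (a : Fin m → ℕ) (p q : Pt K n m) : Prop :=
  ∃ s t : Kˣ, (∀ i, q.1 i = (s : K) * p.1 i) ∧
    (∀ j, q.2 j = ((s ^ (w j) : Kˣ) : K) * (t : K) ^ (a j) * p.2 j)

/-- The punctured affine cone over the member `X = {g = 0}`. -/
def XCone {n m : ℕ} (g : Cox K n m) : Set (Pt K n m) :=
  {p | InCone K p ∧ evalPt K p g = 0}

/-! ### Smoothness via the Jacobian criterion on the cone -/

/-- The hypersurface `{g = 0}` is smooth along (the image of) `S ⊆ 𝔸^n × 𝔸^m`: at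
every point of `S` lying on the cone over `X` some partial derivative of `g` is
nonzero.  On loci where the torus acts freely this is the Jacobian criterion for
smoothness of `X` itself. -/
def JacobiSmoothOn {n m : ℕ} (g : Cox K n m) (S : Set (Pt K n m)) : Prop :=
  ∀ p ∈ S, evalPt K p g = 0 → ∃ v : Fin n ⊕ Fin m, evalPt K p (pderiv v g) ≠ 0

/-- The member `X = {g = 0}` of the linear system is smooth (nonsingular). -/
def IsSmoothModel {n m : ℕ} (g : Cox K n m) : Prop :=
  JacobiSmoothOn K g {p | InCone K p}

/-! ### The function field, rationality, and stable rationality -/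

/-- The homogeneous coordinate ring `Cox/(g)` of the member `X = {g = 0}`,
i.e. the coordinate ring of the affine cone over `X`. -/
abbrev coneRing {n m : ℕ} (g : Cox K n m) : Type :=
  Cox K n m ⧸ Ideal.span {g}

/-- The total fraction ring of the affine cone over `X`; the function field of the
cone when `g` is prime. -/
def FracCone {n m : ℕ} (g : Cox K n m) : Type := FractionRing (coneRing K g)

instance {n m : ℕ} (g : Cox K n m) : CommRing (FracCone K g) :=
  inferInstanceAs (CommRing (FractionRing (coneRing K g)))

instance {n m : ℕ} (g : Cox K n m) : Algebra K (FracCone K g) :=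
  inferInstanceAs (Algebra K (FractionRing (coneRing K g)))

instance {n m : ℕ} (g : Cox K n m) : Algebra (coneRing K g) (FracCone K g) :=
  inferInstanceAs (Algebra (coneRing K g) (FractionRing (coneRing K g)))

/-- The canonical map from the Cox ring to the fraction ring of the cone over `X`. -/
def toFrac {n m : ℕ} (g : Cox K n m) : Cox K n m →+* FracCone K g :=
  (algebraMap (coneRing K g) (FracCone K g)).comp
    (Ideal.Quotient.mk (Ideal.span {g}))

/-- The set of degree-`(0,0)` fractions on the cone over `X`: ratios `p/q` of
bihomogeneous elements of equal bidegree (phrased multiplicatively, avoiding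
inverses). -/
def ratioSet {n m : ℕ} (w : Fin m → ℤ) (a : Fin m → ℕ) (g : Cox K n m) :
    Set (FracCone K g) :=
  {φ | ∃ (α : ℤ) (β : ℕ) (p q : Cox K n m),
    IsBihom K n m w a α β p ∧ IsBihom K n m w a α β q ∧
    toFrac K g q ≠ 0 ∧ φ * toFrac K g q = toFrac K g p}

/-- The `K`-algebra of rational functions on `X = {g = 0}`: the fractions of
degree `(0,0)`.  When `g` is prime this is the function field `K(X)`. -/
def functionFieldModel {n m : ℕ} (w : Fin m → ℤ) (a : Fin m → ℕ) (g : Cox K n m) :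
    Subalgebra K (FracCone K g) :=
  Algebra.adjoin K (ratioSet K w a g)

/-- `X = {g = 0}` is rational: its function field is `K`-isomorphic to a purely
transcendental extension `K(y_1,…,y_N)` of `K`, i.e. `X` is birational to a
projective space. -/
def IsRationalModel {n m : ℕ} (w : Fin m → ℤ) (a : Fin m → ℕ) (g : Cox K n m) :
    Prop :=
  ∃ N : ℕ, Nonempty
    (functionFieldModel K w a g ≃ₐ[K] FractionRing (MvPolynomial (Fin N) K))

/-- `X = {g = 0}` is stably rational: `X × ℙ^r` is birational to a projective
space for some `r`, i.e. `K(X)(x_1,…,x_r) ≅_K K(y_1,…,y_s)` for some `r, s`. -/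
def IsStablyRationalModel {n m : ℕ} (w : Fin m → ℤ) (a : Fin m → ℕ)
    (g : Cox K n m) : Prop :=
  ∃ r s : ℕ, Nonempty
    ((FractionRing (MvPolynomial (Fin r) (functionFieldModel K w a g)))
      ≃ₐ[K] FractionRing (MvPolynomial (Fin s) K))

/-! ### Normality, terminal singularities, class group, ampleness, fibres -/

/-- A prime of the Cox ring is *relevant* if it does not contain either component
of the irrelevant ideal `(u_0,…,u_{n-1}) ∩ (x_0,…,x_{m-1})`. -/
def RelevantPrime {n m : ℕ} (P : Ideal (Cox K n m)) : Prop :=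
  (∃ i, X (Sum.inl i) ∉ P) ∧ (∃ j, X (Sum.inr j) ∉ P)

/-- `X = {g = 0}` is normal: the local rings of the relevant locus of its affine
cone are integrally closed (the punctured cone is a smooth torsor over `X`, so
this is normality of `X`). -/
def IsNormalModel {n m : ℕ} (g : Cox K n m) : Prop :=
  ∀ P : PrimeSpectrum (coneRing K g),
    ((∃ i, Ideal.Quotient.mk (Ideal.span {g}) (X (Sum.inl i)) ∉ P.asIdeal) ∧
     (∃ j, Ideal.Quotient.mk (Ideal.span {g}) (X (Sum.inr j)) ∉ P.asIdeal)) →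
    IsIntegrallyClosed (Localization.AtPrime P.asIdeal)

/-- The singular locus of `X = {g = 0}` has codimension at least `c`: every
relevant prime of the Cox ring containing `g` and all its partial derivatives has
height at least `c + 1` (the height in the cone exceeds the codimension in `X`
by one). -/
def SingularLocusCodimAtLeast {n m : ℕ} (g : Cox K n m) (c : ℕ) : Prop :=
  ∀ P : PrimeSpectrum (Cox K n m), RelevantPrime K P.asIdeal →
    g ∈ P.asIdeal → (∀ v : Fin n ⊕ Fin m, pderiv v g ∈ P.asIdeal) →
    ((c + 1 : ℕ) : WithBot (WithTop ℕ)) ≤ ringKrullDim (Localization.AtPrime P.asIdeal)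

/-- Rendering of "`X` has only terminal singularities" for the members considered
in the paper: `X` is normal and its singular locus has codimension at least 3
(cf. the proof of Lemma 2.8, where the general members with `2m > d > l+m` have
ordinary double points along a nonsingular center of codimension 3). -/
def HasOnlyTerminalSingularitiesModel {n m : ℕ} (g : Cox K n m) : Prop :=
  IsNormalModel K g ∧ SingularLocusCodimAtLeast K g 3

/-- An ideal of the Cox ring is bihomogeneous if it is generated by its
bihomogeneous elements. -/
def IsBihomIdeal {n m : ℕ} (w : Fin m → ℤ) (a : Fin m → ℕ)
    (P : Ideal (Cox K n m)) : Prop :=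
  P ≤ Ideal.span {f | f ∈ P ∧ ∃ α β, IsBihom K n m w a α β f}

/-- A prime divisor of `X = {g = 0}`: a relevant bihomogeneous prime of the Cox
ring containing `g` of height 2 (height 1 over `(g)`). -/
def IsPrimeDivisorOn {n m : ℕ} (w : Fin m → ℤ) (a : Fin m → ℕ) (g : Cox K n m)
    (P : PrimeSpectrum (Cox K n m)) : Prop :=
  g ∈ P.asIdeal ∧ RelevantPrime K P.asIdeal ∧ IsBihomIdeal K w a P.asIdeal ∧
    ringKrullDim (Localization.AtPrime P.asIdeal) = (2 : WithBot (WithTop ℕ))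

/-- Rendering of "`X` is ℚ-factorial with `ρ(X) = 2`", i.e. the divisor class
group of `X` is spanned up to torsion by the pullback `F` of the hyperplane class
and the tautological class `D`: every prime divisor `P` of `X` carries a
bihomogeneous form `f` vanishing on `P` and on no other prime divisor, so that
`div(f) = k·P` for some `k ≥ 1` and hence `[P] ∈ ℚ⟨F,D⟩` in `Cl(X) ⊗ ℚ`. -/
def ClassGroupSpannedByFD {n m : ℕ} (w : Fin m → ℤ) (a : Fin m → ℕ)
    (g : Cox K n m) : Prop :=
  ∀ P : PrimeSpectrum (Cox K n m), IsPrimeDivisorOn K w a g P →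
    ∃ (α : ℤ) (β : ℕ) (f : Cox K n m),
      f ∉ Ideal.span {g} ∧ IsBihom K n m w a α β f ∧ f ∈ P.asIdeal ∧
      ∀ Q : PrimeSpectrum (Cox K n m), IsPrimeDivisorOn K w a g Q → Q ≠ P →
        f ∉ Q.asIdeal

/-- Rendering of "`ρ(X) ≥ 3`": the divisor class group of `X` is not spanned up to
torsion by the fibre class `F` and the tautological class `D`. -/
def PicardRankAtLeastThree {n m : ℕ} (w : Fin m → ℤ) (a : Fin m → ℕ)
    (g : Cox K n m) : Prop :=
  ¬ ClassGroupSpannedByFD K w a g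

/-- The cone over the fibre of `π : X → ℙ^{n-1}` over the point `[u] ∈ ℙ^{n-1}`. -/
def fibreCone {n m : ℕ} (g : Cox K n m) (u : Fin n → K) : Set (Fin m → K) :=
  {v | v ≠ 0 ∧ evalPt K (u, v) g = 0}

/-- The fibres of `π : X → ℙ^{n-1}` are nonempty and connected: no fibre can be
covered by two disjoint nonempty closed subsets, closed subsets of the fibre
being cut out by weighted-homogeneous polynomials in the fibre variables. -/
def FibresNonemptyAndConnected {n m : ℕ} (a : Fin m → ℕ) (g : Cox K n m) : Prop :=
  ∀ u : Fin n → K, u ≠ 0 →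
    (fibreCone K g u).Nonempty ∧
    ∀ A B : Set (MvPolynomial (Fin m) K),
      (∀ q ∈ A ∪ B, ∃ e, IsWHom K m a e q) →
      (∀ v ∈ fibreCone K g u,
        (∀ q ∈ A, MvPolynomial.eval v q = 0) ∨ (∀ q ∈ B, MvPolynomial.eval v q = 0)) →
      (∀ v ∈ fibreCone K g u,
        ¬ ((∀ q ∈ A, MvPolynomial.eval v q = 0) ∧ (∀ q ∈ B, MvPolynomial.eval v q = 0))) →
      ¬ ((∃ v ∈ fibreCone K g u, ∀ q ∈ A, MvPolynomial.eval v q = 0) ∧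
         (∃ v ∈ fibreCone K g u, ∀ q ∈ B, MvPolynomial.eval v q = 0))

/-- The infinitesimal generator of the first torus factor at a cone point. -/
def orbitVec₁ {n m : ℕ} (w : Fin m → ℤ) (p : Pt K n m) : (Fin n ⊕ Fin m) → K :=
  Sum.elim (fun i => p.1 i) (fun j => (w j : K) * p.2 j)

/-- The infinitesimal generator of the second torus factor at a cone point. -/
def orbitVec₂ {n m : ℕ} (a : Fin m → ℕ) (p : Pt K n m) : (Fin n ⊕ Fin m) → K :=
  Sum.elim (fun _ => 0) (fun j => (a j : K) * p.2 j)

/-- The bihomogeneous forms of bidegree `(α,β)` have no base point on `X`. -/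
def BasePointFreeOnX {n m : ℕ} (w : Fin m → ℤ) (a : Fin m → ℕ) (g : Cox K n m)
    (α : ℤ) (β : ℕ) : Prop :=
  ∀ p ∈ XCone K g, ∃ s, IsBihom K n m w a α β s ∧ evalPt K p s ≠ 0

/-- The bihomogeneous forms of bidegree `(α,β)` separate the points of `X`. -/
def SeparatesPointsOnX {n m : ℕ} (w : Fin m → ℤ) (a : Fin m → ℕ) (g : Cox K n m)
    (α : ℤ) (β : ℕ) : Prop :=
  ∀ p ∈ XCone K g, ∀ q ∈ XCone K g, ¬ ToricEq K w a p q →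
    ∃ s₁ s₂, IsBihom K n m w a α β s₁ ∧ IsBihom K n m w a α β s₂ ∧
      evalPt K p s₁ * evalPt K q s₂ ≠ evalPt K q s₁ * evalPt K p s₂

/-- The bihomogeneous forms of bidegree `(α,β)` separate the tangent vectors of
`X`: for every cone point `p` of `X` and every tangent vector `t` of the cone over
`X` at `p` not tangent to the torus orbit, some form vanishing at `p` has nonzero
derivative along `t`. -/
def SeparatesTangentsOnX {n m : ℕ} (w : Fin m → ℤ) (a : Fin m → ℕ) (g : Cox K n m)
    (α : ℤ) (β : ℕ) : Prop :=
  ∀ p ∈ XCone K g, ∀ t : (Fin n ⊕ Fin m) → K,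
    (∑ v : Fin n ⊕ Fin m, t v * evalPt K p (pderiv v g)) = 0 →
    t ∉ Submodule.span K {orbitVec₁ K w p, orbitVec₂ K a p} →
    ∃ s, IsBihom K n m w a α β s ∧ evalPt K p s = 0 ∧
      (∑ v : Fin n ⊕ Fin m, t v * evalPt K p (pderiv v s)) ≠ 0

/-- The class `𝒪_X(α,β)` is ample on `X = {g = 0}`: some positive multiple is very
ample, i.e. its forms are base point free on `X` and separate points and tangent
vectors. -/
def IsAmpleClassOnX {n m : ℕ} (w : Fin m → ℤ) (a : Fin m → ℕ) (g : Cox K n m)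
    (α : ℤ) (β : ℕ) : Prop :=
  ∃ t : ℕ, 0 < t ∧
    BasePointFreeOnX K w a g (t * α) (t * β) ∧
    SeparatesPointsOnX K w a g (t * α) (t * β) ∧
    SeparatesTangentsOnX K w a g (t * α) (t * β)

/-- The canonical class of the ambient bundle `P`, by the toric formula
`K_P = -Σ deg(variables)`. -/
def ambientCanonicalClass (n m : ℕ) (w : Fin m → ℤ) : ℤ × ℤ :=
  (-(n : ℤ) - ∑ j : Fin m, w j, -(m : ℤ))

/-- The anticanonical class `-K_X = -(K_P + X)|_X` of a member `X ∈ |𝒪_P(α,β)|`,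
by adjunction. -/
def memberAntiCanonicalClass (n m : ℕ) (w : Fin m → ℤ) (α : ℤ) (β : ℕ) : ℤ × ℤ :=
  (-((ambientCanonicalClass n m w).1 + α), -((ambientCanonicalClass n m w).2 + β))

/-- `-K_X` is `π`-ample for the projection `π : X → ℙ^{n-1}`: some twist of `-K_X`
by the pullback of a (sufficiently ample) divisor on the base is ample. -/
def AntiCanonicalIsRelativelyAmple {n m : ℕ} (w : Fin m → ℤ) (a : Fin m → ℕ)
    (g : Cox K n m) (α : ℤ) (β : ℕ) : Prop :=
  ∃ N : ℤ,
    IsAmpleClassOnX K w a g ((memberAntiCanonicalClass n m w α β).1 + N)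
      (memberAntiCanonicalClass n m w α β).2.toNat

/-- Rendering of Definition 2.5 of the paper: the projection
`π : X → ℙ^{n-1}` of the member `X = {g = 0} ∈ |𝒪_P(d,2)|` of the `ℙ²`-bundle
`P = P_n(w 0, w 1, w 2)` over `ℙ^{n-1}` is a *conic bundle*, i.e. a Mori fibre
space of relative dimension one: `X` is an (irreducible, normal, projective)
variety with only terminal singularities, `π` has connected fibres, `-K_X` is
`π`-ample, and `X` is ℚ-factorial of Picard rank `ρ(X) = 2`.  (Being embedded in
`|𝒪_P(d,2)|` of a projectivized split rank-3 bundle, this is an *embedded* conic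
bundle in the sense of Definition 2.6.) -/
structure IsConicBundleModel (n : ℕ) (w : Fin 3 → ℤ) (d : ℤ) (g : Cox K n 3) :
    Prop where
  bihom : IsBihom K n 3 w (fun _ => 1) d 2 g
  integral : (Ideal.span {g} : Ideal (Cox K n 3)).IsPrime
  normal : IsNormalModel K g
  terminal : HasOnlyTerminalSingularitiesModel K g
  connectedFibres : FibresNonemptyAndConnected K (fun _ => 1) g
  antiCanonicalRelAmple :
    AntiCanonicalIsRelativelyAmple K w (fun _ => 1) g d 2
  picardRankTwo : ClassGroupSpannedByFD K w (fun _ => 1) g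

/-! ### The discriminant of a conic bundle -/

/-- The coefficient of the monomial `x^e` (in the fibre variables) of `g`, as a
polynomial on the base. -/
def fibreCoeff {n m : ℕ} (g : Cox K n m) (e : Fin m →₀ ℕ) :
    MvPolynomial (Fin n) K :=
  ((MvPolynomial.sumAlgEquiv K (Fin m) (Fin n))
    (MvPolynomial.rename Sum.swap g)).coeff e

/-- The symmetric matrix of the fibrewise quadratic form of a member
`X = {g = 0} ∈ |𝒪_P(d,2)|` (over a field of characteristic zero). -/
def quadraticMatrix {n : ℕ} (g : Cox K n 3) :
    Matrix (Fin 3) (Fin 3) (MvPolynomial (Fin n) K) :=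
  fun i j =>
    if i = j then fibreCoeff K g (Finsupp.single i 2)
    else MvPolynomial.C ((2 : K)⁻¹) *
      fibreCoeff K g (Finsupp.single i 1 + Finsupp.single j 1)

/-- The equation of the discriminant divisor `Δ ⊂ ℙ^{n-1}` of the conic bundle
`π : X → ℙ^{n-1}`, `X = {g = 0}`: the determinant of the associated symmetric
matrix. -/
def discriminantPoly {n : ℕ} (g : Cox K n 3) : MvPolynomial (Fin n) K :=
  (quadraticMatrix K g).det

/-- The complete linear system `|k·K_{ℙ^{n-1}} + Δ|` is nonempty, where `Δ` is the
discriminant divisor of the conic bundle `X = {g = 0}`: the divisor class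
`𝒪(deg Δ - k·n)` on `ℙ^{n-1}` contains an effective divisor. -/
def KMultipleplusDiscriminantEffective {n : ℕ} (g : Cox K n 3) (k : ℕ) : Prop :=
  discriminantPoly K g ≠ 0 ∧
    ∃ h : MvPolynomial (Fin n) K, h ≠ 0 ∧
      IsHomogZ K n (((discriminantPoly K g).totalDegree : ℤ) - k * n) h

/-- `π : X → ℙ^{n-1}` is flat, i.e. no fibre is two-dimensional: `g` does not
vanish identically on any fibre of the ambient bundle.  Together with smoothness
of `X` this renders a *standard* conic bundle. -/
def ProjectionIsFlat {n m : ℕ} (g : Cox K n m) : Prop :=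
  ∀ u : Fin n → K, u ≠ 0 → ∃ v : Fin m → K, evalPt K (u, v) g ≠ 0

end

end ConicBundleFormalization

namespace ConicBundleFormalization

noncomputable section

variable (K : Type) [Field K]

/-! ### The special members `a x² + b y² + c z² + f x y` and the associated double
cover data in characteristic 2 -/

/-- The special member `X = {a x² + b y² + c z² + f x y = 0}` of
`|𝒪_P(λ+μ+ν, 2)|`, `P = P_n(λ,μ,ν)`, built from a quadruple `(a,b,c,f)` of
polynomials on the base (equation (3.1) of the paper). -/
def specialMemberX {n : ℕ} (abcf : Fin 4 → MvPolynomial (Fin n) K) : Cox K n 3 :=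
  rename Sum.inl (abcf 0) * X (Sum.inr 0) ^ 2 +
  rename Sum.inl (abcf 1) * X (Sum.inr 1) ^ 2 +
  rename Sum.inl (abcf 2) * X (Sum.inr 2) ^ 2 +
  rename Sum.inl (abcf 3) * X (Sum.inr 0) * X (Sum.inr 1)

/-- The hypersurface `Z = {a x² + b y² + c z̄ + f x y = 0}` in the
`ℙ(1,1,2)`-bundle `R` over `ℙ^{n-1}` (with `z̄` the third fibre variable, of
weight 2), the image of `X` under the purely inseparable double cover `P → R` in
characteristic 2. -/
def specialMemberZ {n : ℕ} (abcf : Fin 4 → MvPolynomial (Fin n) K) : Cox K n 3 :=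
  rename Sum.inl (abcf 0) * X (Sum.inr 0) ^ 2 +
  rename Sum.inl (abcf 1) * X (Sum.inr 1) ^ 2 +
  rename Sum.inl (abcf 2) * X (Sum.inr 2) +
  rename Sum.inl (abcf 3) * X (Sum.inr 0) * X (Sum.inr 1)

/-! ### Admissible critical points (Definition 3.5 of the paper) -/

/-- A polynomial `F` in `N` variables over a field of characteristic 2 is in
*admissible normal form* at the origin: its linear part vanishes (a critical
point) and, up to an additive constant and higher-order terms,
`F = α + x₀x₁ + x₂x₃ + ⋯ + x_{N-2}x_{N-1}` if `N` is even, and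
`F = α + βx₀² + x₁x₂ + ⋯ + x_{N-2}x_{N-1} + (nonzero)·x₀³ + ⋯` if `N` is odd. -/
def AdmissibleNormalForm {N : ℕ} (F : MvPolynomial (Fin N) K) : Prop :=
  (∀ i, F.coeff (Finsupp.single i 1) = 0) ∧
  (N % 2 = 0 →
    (∀ i, F.coeff (Finsupp.single i 2) = 0) ∧
    (∀ i j : Fin N, (i : ℕ) < (j : ℕ) →
      F.coeff (Finsupp.single i 1 + Finsupp.single j 1) =
        (if (i : ℕ) % 2 = 0 ∧ (j : ℕ) = (i : ℕ) + 1 then 1 else 0))) ∧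
  (N % 2 = 1 →
    (∀ i : Fin N, (i : ℕ) ≠ 0 → F.coeff (Finsupp.single i 2) = 0) ∧
    (∀ i j : Fin N, (i : ℕ) < (j : ℕ) →
      F.coeff (Finsupp.single i 1 + Finsupp.single j 1) =
        (if (i : ℕ) % 2 = 1 ∧ (j : ℕ) = (i : ℕ) + 1 then 1 else 0)) ∧
    (∀ h0 : 0 < N, F.coeff (Finsupp.single (⟨0, h0⟩ : Fin N) 3) ≠ 0))

/-- A local function `F` (a polynomial in the local coordinates indexed by `ι`,
centred at the origin) has an *admissible critical point* at the origin: after a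
suitable (linear) change of coordinates it is in admissible normal form. -/
def AdmissibleLocalFunction {ι : Type} [Fintype ι] (F : MvPolynomial ι K) : Prop :=
  ∃ (N : ℕ) (e : ι ≃ Fin N) (T : Matrix (Fin N) (Fin N) K), IsUnit T.det ∧
    AdmissibleNormalForm K
      ((aeval (fun i : ι => ∑ j : Fin N, MvPolynomial.C (T (e i) j) * X j)) F)

/-- The local expression of the section `z̄` of `𝓛²` on the chart `x = 1` of `Z`
(multiplied by the square unit `c̃²`, i.e. computed with respect to the local
generator `c̃·ξ` of `𝓛`): the polynomial `c·(a + b·y² + f·y)` in the base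
variables and the remaining fibre variable `y`. -/
def chartPolyX {n : ℕ} (abcf : Fin 4 → MvPolynomial (Fin n) K) :
    MvPolynomial (Fin n ⊕ Fin 1) K :=
  rename Sum.inl (abcf 2) *
    (rename Sum.inl (abcf 0) + rename Sum.inl (abcf 1) * X (Sum.inr 0) ^ 2 +
      rename Sum.inl (abcf 3) * X (Sum.inr 0))

/-- The local expression of the section `z̄` on the chart `y = 1` of `Z`:
the polynomial `c·(a·x² + b + f·x)`. -/
def chartPolyY {n : ℕ} (abcf : Fin 4 → MvPolynomial (Fin n) K) :
    MvPolynomial (Fin n ⊕ Fin 1) K :=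
  rename Sum.inl (abcf 2) *
    (rename Sum.inl (abcf 0) * X (Sum.inr 0) ^ 2 + rename Sum.inl (abcf 1) +
      rename Sum.inl (abcf 3) * X (Sum.inr 0))

/-- Translation of a chart polynomial to local coordinates centred at the point
with base coordinates `u0` (normalized by `u0 i0 = 1`) and fibre coordinate `y0`:
substitute `u_{i0} ↦ 1`, `u_j ↦ u_j + u0 j` and `y ↦ y + y0`.  The variables are
the genuine local coordinates `{u_j : j ≠ i0} ∪ {y}` of `Z` at that point. -/
def localAt {n : ℕ} (i0 : Fin n) (u0 : Fin n → K) (y0 : K)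
    (G : MvPolynomial (Fin n ⊕ Fin 1) K) :
    MvPolynomial ({ j : Fin n // j ≠ i0 } ⊕ Fin 1) K :=
  aeval (Sum.elim
    (fun j => if h : j = i0 then 1 else X (Sum.inl ⟨j, h⟩) + MvPolynomial.C (u0 j))
    (fun _ => X (Sum.inr 0) + MvPolynomial.C y0)) G

/-- The section `z̄` of `𝓛²` on `Z = {gZ = 0}` has a *critical point* at the point
below the normalized cone point `p` (with `u_{i0} = 1` and the fibre coordinate
`jfix ∈ {x, y}` normalized to 1): the differential of `z̄` vanishes on the tangent
space of `Z` at that point, i.e. every chart tangent vector `t` of `Z` has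
vanishing `z̄`-component. -/
def CriticalPointOfZbar {n : ℕ} (gZ : Cox K n 3) (i0 : Fin n) (jfix : Fin 3)
    (p : Pt K n 3) : Prop :=
  ∀ t : (Fin n ⊕ Fin 3) → K, t (Sum.inl i0) = 0 → t (Sum.inr jfix) = 0 →
    (∑ v : Fin n ⊕ Fin 3, t v * evalPt K p (pderiv v gZ)) = 0 →
    t (Sum.inr 2) = 0

/-- `p` is a singular point of the cone over `X = {g = 0}`. -/
def SingularConePoint {n m : ℕ} (g : Cox K n m) (p : Pt K n m) : Prop :=
  p ∈ XCone K g ∧ ∀ v : Fin n ⊕ Fin m, evalPt K p (pderiv v g) = 0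

end

end ConicBundleFormalization

namespace ConicBundleFormalization

open MvPolynomial

/-!
Where `x = y = 0` we have `z ≠ 0`, and there the equation of `X` and its `u`-derivatives are
`z²·c` and `z²·∂c/∂uᵢ`; so `X` is smooth along `x = y = 0` as soon as `(c = 0) ⊂ ℙ^{n-1}` is smooth.

Smoothness of a form of degree `d` is an open condition on its coefficients. If `c₀` is smooth,
the Nullstellensatz puts every monomial of some degree `N` into the Jacobian ideal of `c₀`;
fixing homogeneous multipliers for these memberships gives a square Macaulay matrix, polynomial
in the coefficients of `c`, which is the identity at `c₀`. Where its determinant does not vanish,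
every `uᵢ^N` lies in the Jacobian ideal of `c`, so `c` is smooth.

The open set is nonempty since smooth forms of every degree exist over any field: a constant, a
hyperbolic quadric, the Fermat form when `d ≠ 0` in `K`, and a chain form when `d = 0` in `K`.
-/

noncomputable section NonsingularForm

variable {K : Type*} [Field K] {σ : Type*}

/-- For a form `c`, the projective hypersurface `(c = 0)` is smooth. -/
def IsNonsingularForm (c : MvPolynomial σ K) : Prop :=
  ∀ u : σ → K, eval u c = 0 → (∀ i, eval u (pderiv i c) = 0) → u = 0

def jacobianGen : Option σ → MvPolynomial σ K →ₗ[K] MvPolynomial σ K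
  | none => LinearMap.id
  | some i => (pderiv i).toLinearMap

def jacobianIdeal (c : MvPolynomial σ K) : Ideal (MvPolynomial σ K) :=
  Ideal.span (Set.range fun o ↦ jacobianGen o c)

lemma eval_eq_zero_of_mem_jacobianIdeal {c p : MvPolynomial σ K} {u : σ → K}
    (hc : eval u c = 0) (hdc : ∀ i, eval u (pderiv i c) = 0) (hp : p ∈ jacobianIdeal c) :
    eval u p = 0 := by
  suffices jacobianIdeal c ≤ RingHom.ker (eval u) from this hp
  rw [jacobianIdeal, Ideal.span_le, Set.range_subset_iff]
  rintro (_ | i)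
  exacts [hc, hdc i]

lemma IsNonsingularForm.of_X_pow_mem_jacobianIdeal {c : MvPolynomial σ K} {N : ℕ}
    (h : ∀ i, X i ^ N ∈ jacobianIdeal c) : IsNonsingularForm c := fun u hc hdc ↦
  funext fun i ↦ (pow_eq_zero_iff'.mp <| by
    simpa using eval_eq_zero_of_mem_jacobianIdeal hc hdc (h i)).1

lemma IsNonsingularForm.exists_pow_idealOfVars_le [IsAlgClosed K] [Finite σ]
    {c : MvPolynomial σ K} (hc : IsNonsingularForm c) :
    ∃ M, idealOfVars σ K ^ M ≤ jacobianIdeal c := by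
  refine Ideal.exists_pow_le_of_le_radical_of_fg ?_ (idealOfVars_fg σ K)
  rw [idealOfVars, Ideal.span_le, Set.range_subset_iff]
  intro i
  rw [SetLike.mem_coe, ← vanishingIdeal_zeroLocus_eq_radical (K := K)]
  intro u hu
  have hu0 : u = 0 := hc u (hu _ (Ideal.subset_span ⟨none, rfl⟩))
    fun j ↦ hu _ (Ideal.subset_span ⟨some j, rfl⟩)
  simp [hu0]

lemma homogeneousComponent_mul_of_isHomogeneous {p q : MvPolynomial σ K} {δ N : ℕ}
    (hq : q.IsHomogeneous δ) (hδ : δ ≤ N) :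
    homogeneousComponent N (p * q) = homogeneousComponent (N - δ) p * q := by
  conv_lhs => rw [← sum_homogeneousComponent p, Finset.sum_mul, map_sum]
  have hterm : ∀ k, homogeneousComponent N (homogeneousComponent k p * q) =
      if k = N - δ then homogeneousComponent k p * q else 0 := fun k ↦ by
    rw [homogeneousComponent_of_mem ((homogeneousComponent_isHomogeneous k p).mul hq)]
    exact if_congr (by omega) rfl rfl
  simp_rw [hterm, Finset.sum_ite_eq', Finset.mem_range]
  split_ifs with hk
  · rfl
  · rw [homogeneousComponent_eq_zero _ _ (by omega), zero_mul]

end NonsingularForm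

noncomputable section MacaulayRow

variable {K : Type*} [Field K] {σ : Type*}

def jacobianDegree (d : ℕ) (o : Option σ) : ℕ := o.elim d fun _ ↦ d - 1

lemma isHomogeneous_jacobianGen {c : MvPolynomial σ K} {d : ℕ} (hc : c.IsHomogeneous d) :
    ∀ o : Option σ, (jacobianGen o c).IsHomogeneous (jacobianDegree d o)
  | none => hc
  | some _ => hc.pderiv

variable [Fintype σ]

def macaulayRow (h : Option σ → MvPolynomial σ K) : MvPolynomial σ K →ₗ[K] MvPolynomial σ K :=
  ∑ o, LinearMap.mulLeft K (h o) ∘ₗ jacobianGen o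

variable {h : Option σ → MvPolynomial σ K} {c : MvPolynomial σ K}

lemma macaulayRow_apply : macaulayRow h c = ∑ o, h o * jacobianGen o c := by
  simp [macaulayRow]

lemma macaulayRow_mem_jacobianIdeal : macaulayRow h c ∈ jacobianIdeal c := by
  rw [macaulayRow_apply]
  exact Ideal.sum_mem _ fun o _ ↦ Ideal.mul_mem_left _ _ (Ideal.subset_span ⟨o, rfl⟩)

lemma isHomogeneous_macaulayRow {d N : ℕ} (hdN : d ≤ N)
    (hh : ∀ o, (h o).IsHomogeneous (N - jacobianDegree d o)) (hc : c.IsHomogeneous d) :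
    (macaulayRow h c).IsHomogeneous N := by
  rw [macaulayRow_apply]
  refine IsHomogeneous.sum _ _ _ fun o _ ↦ ?_
  convert (hh o).mul (isHomogeneous_jacobianGen hc o)
  cases o <;> simp [jacobianDegree] <;> omega

lemma exists_macaulayRow_eq_monomial {d M N : ℕ} (hc : c.IsHomogeneous d)
    (hM : idealOfVars σ K ^ M ≤ jacobianIdeal c) (hMN : M ≤ N) (hdN : d ≤ N)
    {e : σ →₀ ℕ} (he : e.degree = N) :
    ∃ h : Option σ → MvPolynomial σ K, (∀ o, (h o).IsHomogeneous (N - jacobianDegree d o)) ∧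
      macaulayRow h c = monomial e 1 := by
  have hmem : monomial e (1 : K) ∈ jacobianIdeal c :=
    hM <| Ideal.pow_le_pow_right hMN <|
      (monomial_mem_pow_idealOfVars_iff N e one_ne_zero).mpr he.ge
  obtain ⟨q, hq⟩ := Ideal.mem_span_range_iff_exists_fun.mp hmem
  refine ⟨fun o ↦ homogeneousComponent (N - jacobianDegree d o) (q o),
    fun o ↦ homogeneousComponent_isHomogeneous _ _, ?_⟩
  have hδ : ∀ o : Option σ, jacobianDegree d o ≤ N := by
    rintro (_ | _) <;> simp [jacobianDegree] <;> omega
  rw [macaulayRow_apply, ← homogeneousComponent_eq_self (isHomogeneous_monomial _ he), ← hq,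
    map_sum]
  exact Finset.sum_congr rfl fun o _ ↦
    (homogeneousComponent_mul_of_isHomogeneous (isHomogeneous_jacobianGen hc o) (hδ o)).symm

end MacaulayRow

lemma exists_eval_coeff_eq_det {R σ ι : Type*} [CommRing R] [Fintype ι] [DecidableEq ι]
    (L : ι → ι → MvPolynomial σ R →ₗ[R] R) (s : Finset (σ →₀ ℕ)) :
    ∃ D : MvPolynomial (σ →₀ ℕ) R, ∀ c : MvPolynomial σ R, c.support ⊆ s →
      eval (fun e ↦ c.coeff e) D = (Matrix.of fun i j ↦ L i j c).det := by
  refine ⟨(Matrix.of fun i j ↦ ∑ w ∈ s, C (L i j (monomial w 1)) * X w).det, fun c hc ↦ ?_⟩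
  rw [RingHom.map_det]
  congr 1
  ext i j
  have hc_sum : c = ∑ w ∈ s, c.coeff w • monomial w 1 := by
    conv_lhs => rw [c.as_sum]
    refine Finset.sum_subset hc (fun w _ hw ↦ by simp [notMem_support_iff.mp hw]) |>.trans ?_
    simp [smul_monomial]
  conv_rhs => rw [hc_sum]
  simp [mul_comm]

section MacaulayMatrix

variable {K : Type*} [Field K] {σ : Type*}

lemma exists_sum_smul_eq_monomial_of_det_ne_zero [DecidableEq σ] {N : ℕ} {S : Finset (σ →₀ ℕ)}
    (hS : ∀ e, e ∈ S ↔ e.degree = N) (P : S → MvPolynomial σ K)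
    (hP : ∀ w, (P w).IsHomogeneous N) (hdet : (Matrix.of fun w e : S ↦ (P w).coeff e).det ≠ 0)
    (e : S) : ∃ r : S → K, ∑ w, r w • P w = monomial e 1 := by
  obtain ⟨r, hr⟩ := Matrix.vecMul_surjective_iff_isUnit.mpr
    ((Matrix.isUnit_iff_isUnit_det _).mpr hdet.isUnit) (Pi.single e 1)
  refine ⟨r, ext _ _ fun e' ↦ ?_⟩
  simp only [coeff_sum, coeff_smul, smul_eq_mul, coeff_monomial]
  by_cases he' : e' ∈ S
  · have hcoeff := congrFun hr ⟨e', he'⟩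
    simp only [Matrix.vecMul, dotProduct, Matrix.of_apply] at hcoeff
    rw [hcoeff, Pi.single_apply]
    exact if_congr (by simp [Subtype.ext_iff, eq_comm]) rfl rfl
  · have hdeg : e'.degree ≠ N := fun h ↦ he' ((hS e').mpr h)
    rw [if_neg fun h : (e : σ →₀ ℕ) = e' ↦ he' (h ▸ e.2)]
    exact Finset.sum_eq_zero fun w _ ↦ by rw [(hP w).coeff_eq_zero hdeg, mul_zero]

theorem IsNonsingularForm.exists_open [IsAlgClosed K] [Fintype σ]
    {c₀ : MvPolynomial σ K} {d : ℕ} (hc₀ : c₀.IsHomogeneous d) (hsm : IsNonsingularForm c₀) :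
    ∃ D : MvPolynomial (σ →₀ ℕ) K, eval (fun e ↦ c₀.coeff e) D ≠ 0 ∧
      ∀ c : MvPolynomial σ K, c.IsHomogeneous d → eval (fun e ↦ c.coeff e) D ≠ 0 →
        IsNonsingularForm c := by
  classical
  obtain ⟨M, hM⟩ := hsm.exists_pow_idealOfVars_le
  set N := max M d
  have mem_antidiag {k : ℕ} {e : σ →₀ ℕ} :
      e ∈ (Finset.univ : Finset σ).finsuppAntidiag k ↔ e.degree = k := by
    simp [Finsupp.degree_eq_sum]
  let S := (Finset.univ : Finset σ).finsuppAntidiag N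
  choose h hh hc₀h using fun e : S ↦
    exists_macaulayRow_eq_monomial hc₀ hM (by omega) (by omega) (mem_antidiag.mp e.2)
  obtain ⟨D, hD⟩ := exists_eval_coeff_eq_det (fun w e : S ↦ lcoeff K e.1 ∘ₗ macaulayRow (h w))
    ((Finset.univ : Finset σ).finsuppAntidiag d)
  have hsupp {c : MvPolynomial σ K} (hc : c.IsHomogeneous d) :
      c.support ⊆ (Finset.univ : Finset σ).finsuppAntidiag d := fun e he ↦
    mem_antidiag.mpr (by rw [Finsupp.degree_eq_weight_one]; exact hc (mem_support_iff.mp he))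
  refine ⟨D, ?_, fun c hc hDc ↦ ?_⟩
  · have hone : (Matrix.of fun w e : S ↦ (lcoeff K e.1 ∘ₗ macaulayRow (h w)) c₀) = 1 := by
      ext w e
      simp only [Matrix.of_apply, LinearMap.comp_apply, lcoeff_apply, hc₀h, coeff_monomial,
        Matrix.one_apply, Subtype.ext_iff]
    rw [hD c₀ (hsupp hc₀), hone, Matrix.det_one]
    exact one_ne_zero
  · rw [hD c (hsupp hc)] at hDc
    refine IsNonsingularForm.of_X_pow_mem_jacobianIdeal (N := N) fun i ↦ ?_
    obtain ⟨r, hr⟩ := exists_sum_smul_eq_monomial_of_det_ne_zero (fun _ ↦ mem_antidiag)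
      (fun w ↦ macaulayRow (h w) c) (fun w ↦ isHomogeneous_macaulayRow (by omega) (hh w) hc) hDc
      ⟨Finsupp.single i N, mem_antidiag.mpr (by simp)⟩
    rw [X_pow_eq_monomial, ← hr]
    exact Ideal.sum_mem _ fun w _ ↦
      (jacobianIdeal c).smul_of_tower_mem _ macaulayRow_mem_jacobianIdeal

end MacaulayMatrix

noncomputable section Witnesses

variable {K : Type*} [Field K]

lemma isNonsingularForm_one {σ : Type*} : IsNonsingularForm (1 : MvPolynomial σ K) :=
  fun _ h _ ↦ absurd h (by simp)

lemma isNonsingularForm_sum_X_pow {σ : Type*} [Fintype σ] {d : ℕ} (hd : (d : K) ≠ 0) :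
    IsNonsingularForm (∑ i, X i ^ d : MvPolynomial σ K) := by
  classical
  intro u _ hdu
  funext i
  have h : (d : K) * u i ^ (d - 1) = 0 := by simpa [pderiv_X, Pi.single_apply] using hdu i
  exact (pow_eq_zero_iff'.mp ((mul_eq_zero.mp h).resolve_left hd)).1

lemma pderiv_rename_eq_zero {σ τ : Type*} {f : τ → σ} {i : σ} (hi : ∀ j, f j ≠ i)
    (p : MvPolynomial τ K) : pderiv i (rename f p) = 0 := by
  classical
  refine pderiv_eq_zero_of_notMem_vars fun h ↦ ?_
  obtain ⟨j, -, rfl⟩ := Finset.mem_image.mp (vars_rename f p h)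
  exact hi j rfl

/-- `u₀u₁ + u₂u₃ + ⋯`, plus `u_{n-1}²` when `n` is odd. -/
def hyperbolicQuadric : (n : ℕ) → MvPolynomial (Fin n) K
  | 0 => 0
  | 1 => X 0 ^ 2
  | n + 2 => X 0 * X 1 + rename (fun i ↦ i.succ.succ) (hyperbolicQuadric n)

lemma isHomogeneous_hyperbolicQuadric :
    ∀ n, (hyperbolicQuadric n : MvPolynomial (Fin n) K).IsHomogeneous 2
  | 0 => isHomogeneous_zero _ _ _
  | 1 => isHomogeneous_X_pow _ _
  | n + 2 => ((isHomogeneous_X _ _).mul (isHomogeneous_X _ _)).add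
      ((isHomogeneous_hyperbolicQuadric n).rename_isHomogeneous)

lemma isNonsingularForm_hyperbolicQuadric :
    ∀ n, IsNonsingularForm (hyperbolicQuadric n : MvPolynomial (Fin n) K)
  | 0 => fun _ _ _ ↦ Subsingleton.elim _ _
  | 1 => fun u hu _ ↦ funext fun i ↦ by
      fin_cases i
      simpa [hyperbolicQuadric] using hu
  | n + 2 => by
      intro u hu hdu
      have hss : Function.Injective fun i : Fin n ↦ i.succ.succ :=
        (Fin.succ_injective _).comp (Fin.succ_injective _)
      have hrest₀ := pderiv_rename_eq_zero (K := K) (fun j : Fin n ↦ j.succ.succ_ne_zero)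
        (hyperbolicQuadric n)
      have hrest₁ := pderiv_rename_eq_zero (K := K) Fin.succ_succ_ne_one (hyperbolicQuadric n)
      have hu0 : u 0 = 0 := by simpa [hyperbolicQuadric, hrest₁, pderiv_X] using hdu 1
      have hu1 : u 1 = 0 := by simpa [hyperbolicQuadric, hrest₀, pderiv_X] using hdu 0
      have hw : u ∘ (fun i : Fin n ↦ i.succ.succ) = 0 :=
        isNonsingularForm_hyperbolicQuadric n _
          (by simpa [hyperbolicQuadric, eval_rename, hu0, hu1] using hu)
          fun i ↦ by simpa [hyperbolicQuadric, pderiv_rename hss, eval_rename, pderiv_X,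
            Pi.single_apply, (Fin.succ_succ_ne_one i).symm] using hdu i.succ.succ
      funext i
      exact Fin.cases hu0 (Fin.cases hu1 fun j ↦ congrFun hw j) i

/-- `u₀^{d-1}u₁ + u₁^{d-1}u₂ + ⋯ + u_{m-1}^{d-1}u_m + u_m^d`. -/
def chainForm (d : ℕ) : (m : ℕ) → MvPolynomial (Fin (m + 1)) K
  | 0 => X 0 ^ d
  | m + 1 => X 0 ^ (d - 1) * X 1 + rename Fin.succ (chainForm d m)

lemma isHomogeneous_chainForm {d : ℕ} (hd : d ≠ 0) :
    ∀ m, (chainForm d m : MvPolynomial _ K).IsHomogeneous d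
  | 0 => isHomogeneous_X_pow _ _
  | m + 1 => by
      refine .add ?_ (isHomogeneous_chainForm hd m).rename_isHomogeneous
      convert (isHomogeneous_X_pow (0 : Fin (m + 2)) (d - 1)).mul (isHomogeneous_X K 1) using 1
      omega

/-- Induction on the chain by adding the variable `u₀` in front: `∂/∂u₁` is `u₀^{d-1}` plus the
first partial of the shorter chain, which vanishes by induction, so `u₀ = 0`. -/
lemma chainForm_of_pderiv_eq_zero {d : ℕ} (hd : (d : K) = 0) (hd3 : 3 ≤ d) :
    ∀ m (u : Fin (m + 1) → K), (∀ i ≠ 0, eval u (pderiv i (chainForm d m)) = 0) →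
      eval u (pderiv 0 (chainForm d m)) = 0 ∧ eval u (chainForm d m) = u (Fin.last m) ^ d ∧
        ∀ i : Fin m, u i.castSucc = 0
  | 0, u, _ => by simp [chainForm, hd]
  | m + 1, u, hu => by
      have hrest := pderiv_rename_eq_zero (K := K) Fin.succ_ne_zero (chainForm d m)
      have hsucc (i : Fin (m + 1)) : eval u (pderiv i.succ (chainForm d (m + 1))) =
          (if i = 0 then u 0 ^ (d - 1) else 0) +
            eval (u ∘ Fin.succ) (pderiv i (chainForm d m)) := by
        have h1 : 1 = i.succ ↔ i = 0 := by rw [← Fin.succ_zero_eq_one, Fin.succ_inj, eq_comm]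
        simp [chainForm, pderiv_rename (Fin.succ_injective _), eval_rename, pderiv_X,
          Pi.single_apply, h1, apply_ite (eval u)]
      obtain ⟨h0, hval, hcast⟩ := chainForm_of_pderiv_eq_zero hd hd3 m (u ∘ Fin.succ)
        fun i hi ↦ by simpa [hsucc, hi] using hu i.succ (Fin.succ_ne_zero i)
      have hu0 : u 0 = 0 := by
        have h := hu (Fin.succ 0) (Fin.succ_ne_zero 0)
        rw [hsucc, if_pos rfl, h0, add_zero] at h
        exact pow_eq_zero_iff (by omega) |>.mp h
      refine ⟨?_, ?_, Fin.cases hu0 fun j ↦ by rw [← Fin.succ_castSucc]; exact hcast j⟩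
      · simp [chainForm, hrest, pderiv_X, hu0, zero_pow (show d - 1 - 1 ≠ 0 by omega)]
      · simp [chainForm, eval_rename, hu0, hval, zero_pow (show d - 1 ≠ 0 by omega)]

lemma isNonsingularForm_chainForm {d : ℕ} (hd : (d : K) = 0) (hd3 : 3 ≤ d) (m : ℕ) :
    IsNonsingularForm (chainForm d m : MvPolynomial _ K) := fun u hu hdu ↦ by
  obtain ⟨-, hval, hcast⟩ := chainForm_of_pderiv_eq_zero hd hd3 m u fun i _ ↦ hdu i
  have hlast : u (Fin.last m) = 0 := pow_eq_zero_iff (by omega) |>.mp (hval ▸ hu)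
  funext i
  exact Fin.lastCases hlast hcast i

theorem exists_isNonsingularForm (n d : ℕ) :
    ∃ c : MvPolynomial (Fin n) K, c.IsHomogeneous d ∧ IsNonsingularForm c := by
  rcases n with _ | m
  · exact ⟨0, isHomogeneous_zero _ _ _, fun _ _ _ ↦ Subsingleton.elim _ _⟩
  rcases eq_or_ne d 0 with rfl | hd0
  · exact ⟨1, isHomogeneous_one _ _, isNonsingularForm_one⟩
  rcases eq_or_ne d 2 with rfl | hd2
  · exact ⟨_, isHomogeneous_hyperbolicQuadric _, isNonsingularForm_hyperbolicQuadric _⟩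
  by_cases hdK : (d : K) = 0
  · have hd1 : d ≠ 1 := by rintro rfl; simp at hdK
    exact ⟨_, isHomogeneous_chainForm hd0 m, isNonsingularForm_chainForm hdK (by omega) m⟩
  · exact ⟨∑ i, X i ^ d, IsHomogeneous.sum _ _ _ fun i _ ↦ isHomogeneous_X_pow i d,
      isNonsingularForm_sum_X_pow hdK⟩

end Witnesses

section SpecialMember

variable {K : Type} [Field K] {n : ℕ}

lemma isHomogZ_zero {d : ℤ} : IsHomogZ K n d 0 := fun e he ↦ by simp at he

lemma isHomogZ_natCast_iff {d : ℕ} {p : MvPolynomial (Fin n) K} :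
    IsHomogZ K n d p ↔ p.IsHomogeneous d := by
  simp only [IsHomogZ, IsHomogeneous, IsWeightedHomogeneous, mem_support_iff]
  refine forall₂_congr fun e _ ↦ ?_
  change _ ↔ Finsupp.weight (fun _ ↦ 1) e = d
  rw [← Finsupp.degree_eq_weight_one, Finsupp.degree_eq_sum]
  norm_cast

lemma pderiv_inl_specialMemberX (abcf : Fin 4 → MvPolynomial (Fin n) K) (i : Fin n) :
    pderiv (Sum.inl i) (specialMemberX K abcf) =
      specialMemberX K fun k ↦ pderiv i (abcf k) := by
  simp only [specialMemberX, map_add, Derivation.leibniz, Derivation.leibniz_pow, pderiv_X,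
    Pi.single_eq_of_ne, reduceCtorEq, ne_eq, not_false_eq_true, Nat.add_one_sub_one, pow_one,
    smul_eq_mul, mul_zero, nsmul_zero, pderiv_rename Sum.inl_injective, zero_add]
  ring

lemma evalPt_specialMemberX_of_xy_eq_zero (abcf : Fin 4 → MvPolynomial (Fin n) K)
    {p : Pt K n 3} (hx : p.2 0 = 0) (hy : p.2 1 = 0) :
    evalPt K p (specialMemberX K abcf) = eval p.1 (abcf 2) * p.2 2 ^ 2 := by
  simp [evalPt, specialMemberX, eval_rename, hx, hy]

lemma jacobiSmoothOn_specialMemberX_of_isNonsingularForm {abcf : Fin 4 → MvPolynomial (Fin n) K}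
    (hc : IsNonsingularForm (abcf 2)) :
    JacobiSmoothOn K (specialMemberX K abcf) {p | InCone K p ∧ p.2 0 = 0 ∧ p.2 1 = 0} := by
  rintro ⟨u, v⟩ ⟨⟨hu, hv⟩, hx, hy⟩ hX
  have hz : v 2 ^ 2 ≠ 0 := pow_ne_zero 2 fun hz ↦ hv (funext fun j ↦ by fin_cases j <;> assumption)
  rw [evalPt_specialMemberX_of_xy_eq_zero abcf hx hy] at hX
  by_contra! hsing
  refine hu (hc u ((mul_eq_zero.mp hX).resolve_right hz) fun i ↦ ?_)
  have h := hsing (Sum.inl i)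
  rw [pderiv_inl_specialMemberX, evalPt_specialMemberX_of_xy_eq_zero _ hx hy] at h
  exact (mul_eq_zero.mp h).resolve_right hz

end SpecialMember

theorem lem_X_smooth_along_xy_locus_char_two_general
    (K : Type) [Field K] [IsAlgClosed K]
    (n : ℕ) (lam mu nu : ℤ)
    (h3 : nu ≤ lam + mu) :
    GenerallyHolds4 K n ![-lam + mu + nu, lam - mu + nu, lam + mu - nu, nu]
      (fun abcf =>
        JacobiSmoothOn K (specialMemberX K abcf)
          {p | InCone K p ∧ p.2 0 = 0 ∧ p.2 1 = 0}) := by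
  obtain ⟨d, hd⟩ : ∃ d : ℕ, lam + mu - nu = d := ⟨(lam + mu - nu).toNat, by omega⟩
  obtain ⟨c₀, hc₀, hsm⟩ := exists_isNonsingularForm (K := K) n d
  obtain ⟨D, hD₀, hD⟩ := hsm.exists_open hc₀
  have hevalD (abcf : Fin 4 → MvPolynomial (Fin n) K) :
      evalCoeff4 K abcf (rename (Prod.mk 2) D) = eval (fun e ↦ (abcf 2).coeff e) D := by
    simp [evalCoeff4, eval_rename, Function.comp_def]
  refine ⟨rename (Prod.mk 2) D, ⟨Pi.single 2 c₀, fun i ↦ ?_, by simpa [hevalD] using hD₀⟩,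
    fun abcf habcf hne ↦ ?_⟩
  · rcases eq_or_ne i 2 with rfl | hi
    · simpa [hd] using isHomogZ_natCast_iff.mpr hc₀
    · simpa [hi] using isHomogZ_zero
  · refine jacobiSmoothOn_specialMemberX_of_isNonsingularForm (hD _ ?_ (hevalD abcf ▸ hne))
    exact isHomogZ_natCast_iff.mp (by simpa [hd] using habcf 2)

/-- **Lemma 3.7.**  Over an algebraically closed field of characteristic 2, the
special member `X = {a x² + b y² + c z² + f x y = 0} ⊂ P_n(λ,μ,ν)` with `a,b,c,f`
general is smooth along `X ∖ X° = X ∩ (x = y = 0)`. -/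
theorem lem_X_smooth_along_xy_locus_char_two
    (K : Type) [Field K] [IsAlgClosed K] [CharP K 2]
    (n : ℕ) (hn : 3 ≤ n) (lam mu nu : ℤ)
    (h0 : 0 < lam) (h1 : lam ≤ mu) (h2 : mu ≤ nu) (h3 : nu ≤ lam + mu)
    (h4 : 3 ≤ nu) :
    GenerallyHolds4 K n ![-lam + mu + nu, lam - mu + nu, lam + mu - nu, nu]
      (fun abcf =>
        JacobiSmoothOn K (specialMemberX K abcf)
          {p | InCone K p ∧ p.2 0 = 0 ∧ p.2 1 = 0}) :=
  lem_X_smooth_along_xy_locus_char_two_general K n lam mu nu h3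

end ConicBundleFormalization
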